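/- arXiv:1309.0492 — 5 statements merged into one kernel-verified Lean document; each statement's English description precedes it below -/
import Mathlib

section
/- For any prime p, the group of upper unitriangular n×n matrices over the ring ℤ[1/p] is uniquely p-radicable: for every element g there is a unique element h with h^p = g. -/
/-!
Filter the matrices over a commutative ring `R` by `F d`, those vanishing below the `d`-th
superdiagonal, so that `F d * F e ⊆ F (d + e)` and `F n = 0`. For unitriangular `X`, `Y`
with `X - Y ∈ F d` one has `X ^ k - Y ^ k ≡ k • (X - Y) mod F (d + 1)`. When `k` is
invertible in `R`, this gives uniqueness of unitriangular `k`-th roots (`X - Y` lies in every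
`F d`) and existence by Newton's iteration `X ↦ X - k⁻¹ • (X ^ k - G)`, each step gaining one
superdiagonal. In `ℤ[1/p]`, `p` is invertible.
-/

/-- `M` is upper unitriangular: ones on the diagonal and zeros below it. -/
def IsUnitriangular {n : ℕ} {R : Type*} [CommRing R]
    (M : Matrix (Fin n) (Fin n) R) : Prop :=
  (∀ i, M i i = 1) ∧ ∀ i j : Fin n, j < i → M i j = 0

namespace Matrix

variable (R : Type*) [CommRing R] (n : ℕ)

def superdiagFiltration (d : ℕ) : Submodule R (Matrix (Fin n) (Fin n) R) where
  carrier := {M | ∀ i j : Fin n, (j : ℕ) < i + d → M i j = 0}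
  add_mem' hM hN i j hij := by simp [hM i j hij, hN i j hij]
  zero_mem' _ _ _ := rfl
  smul_mem' c M hM i j hij := by simp [hM i j hij]

variable {R n}

theorem superdiagFiltration_antitone : Antitone (superdiagFiltration R n) :=
  fun _ _ hde _ hM i j hij => hM i j (by omega)

theorem superdiagFiltration_self : superdiagFiltration R n n = ⊥ := by
  refine eq_bot_iff.mpr fun M hM => ?_
  ext i j
  exact hM i j (by omega)

theorem mul_mem_superdiagFiltration {d e : ℕ} {M N : Matrix (Fin n) (Fin n) R}
    (hM : M ∈ superdiagFiltration R n d) (hN : N ∈ superdiagFiltration R n e) :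
    M * N ∈ superdiagFiltration R n (d + e) := fun i j hij => by
  rw [mul_apply]
  refine Finset.sum_eq_zero fun k _ => ?_
  by_cases hk : (k : ℕ) < i + d
  · rw [hM i k hk, zero_mul]
  · rw [hN k j (by omega), mul_zero]

theorem isUnitriangular_iff_sub_one_mem {M : Matrix (Fin n) (Fin n) R} :
    IsUnitriangular M ↔ M - 1 ∈ superdiagFiltration R n 1 := by
  refine ⟨fun ⟨hdiag, hlow⟩ i j hij => ?_, fun hM => ⟨fun i => ?_, fun i j hij => ?_⟩⟩
  · rcases (Nat.lt_succ_iff.mp hij).lt_or_eq with hji | hji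
    · simp [hlow i j hji, one_apply_ne (Fin.ne_of_gt hji)]
    · obtain rfl := Fin.ext hji
      simp [hdiag]
  · simpa [sub_eq_zero] using hM i i (by omega)
  · simpa [one_apply_ne (ne_of_gt hij)] using hM i j (by omega)

end Matrix

open Matrix

namespace IsUnitriangular

variable {R : Type*} [CommRing R] {n : ℕ}

theorem mul {M N : Matrix (Fin n) (Fin n) R} (hM : IsUnitriangular M)
    (hN : IsUnitriangular N) : IsUnitriangular (M * N) := by
  rw [isUnitriangular_iff_sub_one_mem] at *
  have h := mul_mem_superdiagFiltration hM hN
  have e : M * N - 1 = (M - 1) * (N - 1) + (M - 1) + (N - 1) := by noncomm_ring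
  rw [e]
  exact add_mem (add_mem (superdiagFiltration_antitone (by omega) h) hM) hN

theorem pow {M : Matrix (Fin n) (Fin n) R} (hM : IsUnitriangular M) (k : ℕ) :
    IsUnitriangular (M ^ k) := by
  induction k with
  | zero => simp [isUnitriangular_iff_sub_one_mem]
  | succ k ih => exact (pow_succ M k) ▸ ih.mul hM

theorem isUnit {M : Matrix (Fin n) (Fin n) R} (hM : IsUnitriangular M) :
    IsUnit M := by
  rw [isUnit_iff_isUnit_det, det_of_isUpperTriangular fun i j hij => hM.2 i j hij]
  simp [hM.1]

theorem pow_sub_pow_sub_nsmul_mem {X Y : Matrix (Fin n) (Fin n) R} (hX : IsUnitriangular X)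
    (hY : IsUnitriangular Y) {d : ℕ} (hXY : X - Y ∈ superdiagFiltration R n d) (k : ℕ) :
    X ^ k - Y ^ k - k • (X - Y) ∈ superdiagFiltration R n (d + 1) := by
  induction k with
  | zero => simp
  | succ k ih =>
    have hX₁ := isUnitriangular_iff_sub_one_mem.mp hX
    have hYk₁ := isUnitriangular_iff_sub_one_mem.mp (hY.pow k)
    have e : X ^ (k + 1) - Y ^ (k + 1) - (k + 1) • (X - Y) =
        (X ^ k - Y ^ k - k • (X - Y)) + (X - 1) * (X ^ k - Y ^ k - k • (X - Y)) +
          k • ((X - 1) * (X - Y)) + (X - Y) * (Y ^ k - 1) := by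
      rw [pow_succ' X, pow_succ' Y, add_smul, one_smul]
      simp only [mul_sub, sub_mul, mul_smul_comm, mul_one, one_mul, smul_sub]
      abel
    rw [e]
    refine add_mem (add_mem (add_mem ih ?_) ?_) ?_
    · exact superdiagFiltration_antitone (by omega) (mul_mem_superdiagFiltration hX₁ ih)
    · exact Submodule.smul_of_tower_mem _ k
        (add_comm 1 d ▸ mul_mem_superdiagFiltration hX₁ hXY)
    · exact mul_mem_superdiagFiltration hXY hYk₁

theorem eq_of_pow_eq {k : ℕ} (hk : IsUnit (k : R)) {X Y : Matrix (Fin n) (Fin n) R}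
    (hX : IsUnitriangular X) (hY : IsUnitriangular Y) (h : X ^ k = Y ^ k) : X = Y := by
  suffices ∀ d, X - Y ∈ superdiagFiltration R n d by
    simpa [superdiagFiltration_self, sub_eq_zero] using this n
  intro d
  induction d with
  | zero =>
    have h₁ := sub_mem (isUnitriangular_iff_sub_one_mem.mp hX)
      (isUnitriangular_iff_sub_one_mem.mp hY)
    rw [sub_sub_sub_cancel_right] at h₁
    exact superdiagFiltration_antitone (Nat.zero_le 1) h₁
  | succ d ih =>
    have h₁ := hX.pow_sub_pow_sub_nsmul_mem hY ih k
    rwa [h, sub_self, zero_sub, neg_mem_iff, ← Nat.cast_smul_eq_nsmul R,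
      Submodule.smul_mem_iff_of_isUnit _ hk] at h₁

theorem exists_pow_sub_mem {k : ℕ} (hk : IsUnit (k : R)) {G : Matrix (Fin n) (Fin n) R}
    (hG : IsUnitriangular G) (d : ℕ) :
    ∃ X, IsUnitriangular X ∧ X ^ k - G ∈ superdiagFiltration R n (d + 1) := by
  induction d with
  | zero =>
    refine ⟨1, ?_, ?_⟩
    · simp [isUnitriangular_iff_sub_one_mem]
    · rw [one_pow, ← neg_sub]
      exact neg_mem (isUnitriangular_iff_sub_one_mem.mp hG)
  | succ d ih =>
    obtain ⟨X, hX, hE⟩ := ih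
    obtain ⟨c, hc⟩ := hk.exists_right_inv
    have hcE : c • (X ^ k - G) ∈ superdiagFiltration R n (d + 1) := Submodule.smul_mem _ c hE
    have hX' : IsUnitriangular (X - c • (X ^ k - G)) := by
      rw [isUnitriangular_iff_sub_one_mem, sub_right_comm]
      exact sub_mem (isUnitriangular_iff_sub_one_mem.mp hX)
        (superdiagFiltration_antitone (by omega) hcE)
    refine ⟨_, hX', ?_⟩
    have h₁ := hX'.pow_sub_pow_sub_nsmul_mem hX (d := d + 1) (by simpa using hcE) k
    have e : k • (X - c • (X ^ k - G) - X) = -(X ^ k - G) := by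
      rw [sub_sub_cancel_left, ← Nat.cast_smul_eq_nsmul R, smul_neg, smul_smul, hc, one_smul]
    rwa [e, sub_neg_eq_add, sub_add_sub_cancel] at h₁

theorem existsUnique_pow_eq {k : ℕ} (hk : IsUnit (k : R)) {G : Matrix (Fin n) (Fin n) R}
    (hG : IsUnitriangular G) : ∃! X, IsUnitriangular X ∧ X ^ k = G := by
  obtain ⟨X, hX, hXG⟩ := exists_pow_sub_mem hk hG n
  have hXG' : X ^ k = G := by
    simpa [superdiagFiltration_self, sub_eq_zero] using
      superdiagFiltration_antitone (Nat.le_succ n) hXG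
  exact ⟨X, ⟨hX, hXG'⟩, fun Y ⟨hY, hYG⟩ => hY.eq_of_pow_eq hk hX (hYG.trans hXG'.symm)⟩

end IsUnitriangular

theorem unitriangular_zInvP_uniquely_p_radicable_general (p : ℕ) (n : ℕ)
    (g : (Matrix (Fin n) (Fin n) (Localization.Away (p : ℤ)))ˣ)
    (hg : IsUnitriangular (g : Matrix (Fin n) (Fin n) (Localization.Away (p : ℤ)))) :
    ∃! h : (Matrix (Fin n) (Fin n) (Localization.Away (p : ℤ)))ˣ,
      IsUnitriangular (h : Matrix (Fin n) (Fin n) (Localization.Away (p : ℤ))) ∧ h ^ p = g := by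
  have hpu : IsUnit (p : Localization.Away (p : ℤ)) := by
    simpa using IsLocalization.Away.algebraMap_isUnit (S := Localization.Away (p : ℤ)) (p : ℤ)
  obtain ⟨X, ⟨hX, hXg⟩, huniq⟩ := IsUnitriangular.existsUnique_pow_eq hpu hg
  refine ⟨hX.isUnit.unit, ⟨hX, Units.ext hXg⟩, fun h ⟨hh, hhg⟩ => Units.ext ?_⟩
  exact huniq _ ⟨hh, by rw [← Units.val_pow_eq_pow_val, hhg]⟩

/-- The group of upper unitriangular `n × n` matrices over `ℤ[1/p]` is uniquely
`p`-radicable: every unitriangular `g` has a unique unitriangular `p`-th root. -/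
theorem unitriangular_zInvP_uniquely_p_radicable (p : ℕ) (hp : p.Prime) (n : ℕ)
    (g : (Matrix (Fin n) (Fin n) (Localization.Away (p : ℤ)))ˣ)
    (hg : IsUnitriangular (g : Matrix (Fin n) (Fin n) (Localization.Away (p : ℤ)))) :
    ∃! h : (Matrix (Fin n) (Fin n) (Localization.Away (p : ℤ)))ˣ,
      IsUnitriangular (h : Matrix (Fin n) (Fin n) (Localization.Away (p : ℤ))) ∧ h ^ p = g :=
  unitriangular_zInvP_uniquely_p_radicable_general p n g hg
end

section
/- If a torsion-free group G is uniquely p-radicable, then every finite-index subgroup of G is uniquely p-radicable. -/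
/-!
Uniqueness of roots passes to any subgroup, so the point is that a `p`-th root of an element
of `H` already lies in `H`. Modulo the normal core `N` of `H`, which has finite index, the `p`-th
power map of the finite group `G ⧸ N` is surjective, hence injective, and so is its restriction to
the finite subgroup `H ⧸ N`, which is therefore surjective too. So if `x ^ p ∈ H`, then
`x ^ p ≡ y ^ p` modulo `N` for some `y ∈ H`, whence `x ≡ y` modulo `N` and `x ∈ H`.
-/

open Function

section

variable {G Q : Type*} [Group G] [Group Q] {n : ℕ}

theorem MonoidHom.surjective_pow_of_surjective {f : G →* Q} (hf : Surjective f)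
    (hn : Surjective fun x : G => x ^ n) : Surjective fun y : Q => y ^ n := by
  intro y
  obtain ⟨x, rfl⟩ := hf y
  obtain ⟨z, rfl⟩ := hn x
  exact ⟨f z, (map_pow f z n).symm⟩

theorem Subgroup.injective_pow_of_injective (hn : Injective fun x : G => x ^ n)
    (H : Subgroup G) : Injective fun h : H => h ^ n :=
  fun a b hab => Subtype.ext (hn (by simpa using congrArg Subtype.val hab))

theorem Subgroup.mem_of_pow_mem_of_finite [Finite Q] (hn : Surjective fun y : Q => y ^ n)
    (K : Subgroup Q) {y : Q} (hy : y ^ n ∈ K) : y ∈ K := by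
  have hinj : Injective fun y : Q => y ^ n := Finite.injective_iff_surjective.mpr hn
  obtain ⟨k, hk⟩ :=
    Finite.injective_iff_surjective.mp (K.injective_pow_of_injective hinj) ⟨y ^ n, hy⟩
  have : (k : Q) = y := hinj (by simpa using congrArg Subtype.val hk)
  exact this ▸ k.2

theorem Subgroup.mem_of_pow_mem_of_finiteIndex (hn : Surjective fun x : G => x ^ n)
    (H : Subgroup G) [H.FiniteIndex] {x : G} (hx : x ^ n ∈ H) : x ∈ H := by
  let π := QuotientGroup.mk' H.normalCore
  have hπ : Surjective fun y : G ⧸ H.normalCore => y ^ n :=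
    π.surjective_pow_of_surjective (QuotientGroup.mk'_surjective _) hn
  have hmap : π x ∈ H.map π :=
    mem_of_pow_mem_of_finite hπ _ (map_pow π x n ▸ mem_map_of_mem π hx)
  rwa [← mem_comap, comap_map_eq, QuotientGroup.ker_mk', sup_eq_left.mpr H.normalCore_le] at hmap

theorem Subgroup.bijective_pow_of_finiteIndex (hn : Bijective fun x : G => x ^ n)
    (H : Subgroup G) [H.FiniteIndex] : Bijective fun h : H => h ^ n := by
  refine ⟨H.injective_pow_of_injective hn.1, ?_⟩
  intro h
  obtain ⟨x, hx : x ^ n = h⟩ := hn.2 h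
  exact ⟨⟨x, mem_of_pow_mem_of_finiteIndex hn.2 H (hx ▸ h.2)⟩, Subtype.ext hx⟩

end

theorem finite_index_subgroup_uniquely_radicable_general
    (p : ℕ) (G : Type*) [Group G]
    (hrad : ∀ g : G, ∃! h : G, h ^ p = g)
    (H : Subgroup G) (hH : H.FiniteIndex) :
    ∀ g : H, ∃! h : H, h ^ p = g :=
  (bijective_iff_existsUnique _).mp <|
    H.bijective_pow_of_finiteIndex ((bijective_iff_existsUnique _).mpr hrad)

/-- If a torsion-free group `G` is uniquely `p`-radicable, then every finite-index
subgroup of `G` is uniquely `p`-radicable. -/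
theorem finite_index_subgroup_uniquely_radicable
    (p : ℕ) (hp : p.Prime) (G : Type*) [Group G]
    (htf : ∀ g : G, g ≠ 1 → ¬ IsOfFinOrder g)
    (hrad : ∀ g : G, ∃! h : G, h ^ p = g)
    (H : Subgroup G) (hH : H.FiniteIndex) :
    ∀ g : H, ∃! h : H, h ^ p = g :=
  finite_index_subgroup_uniquely_radicable_general p G hrad H hH
end

section
/- Every subgroup of finite index in the additive group ℤ[1/p] is equal to c·ℤ[1/p] for some positive integer c coprime to p; in particular every finite-index subgroup of ℤ[1/p] is isomorphic to ℤ[1/p]. -/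
/-!
Let `c` be the part of the index `n` of `H` prime to `p`. Since `p` is a unit in `ℤ[1/p]`,
`c • ℤ[1/p] = n • ℤ[1/p] ⊆ H`. For `x ∈ H` both `p • (x / p) = x` and `c • (x / p)` lie in `H`,
so by Bézout `x / p ∈ H`: `H` is an ideal of the localization `ℤ[1/p]`, hence generated by its
trace `d ℤ` on `ℤ`. As `c ∈ d ℤ`, `d` is a positive divisor of `c`, thus prime to `p`, and
multiplication by `d` maps `ℤ[1/p]` isomorphically onto `H`.
-/

open IsLocalization

theorem AddSubgroup.mem_of_zsmul_mem_of_isCoprime {G : Type*} [AddGroup G] (H : AddSubgroup G)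
    {a b : ℤ} (hab : IsCoprime a b) {x : G} (ha : a • x ∈ H) (hb : b • x ∈ H) : x ∈ H := by
  obtain ⟨u, v, huv⟩ := hab
  have hx : u • a • x + v • b • x = x := by
    rw [← mul_zsmul, ← mul_zsmul, ← add_zsmul, huv, one_zsmul]
  exact hx ▸ H.add_mem (H.zsmul_mem ha u) (H.zsmul_mem hb v)

theorem AddSubgroup.ordCompl_index_mul_mem {R : Type*} [CommRing R] {p : ℕ} (hp : IsUnit (p : R))
    (H : AddSubgroup R) (y : R) : ((ordCompl[p] H.index : ℕ) : R) * y ∈ H := by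
  obtain ⟨u, hu⟩ := hp
  set k := H.index.factorization p
  have hidx : (H.index : R) = p ^ k * (ordCompl[p] H.index : ℕ) := by
    rw [← Nat.cast_pow, ← Nat.cast_mul, Nat.ordProj_mul_ordCompl_eq_self]
  have h := H.nsmul_index_mem (↑(u⁻¹ ^ k) * y)
  rwa [nsmul_eq_mul, hidx, ← hu, ← Units.val_pow_eq_pow_val, mul_comm (↑(u ^ k) : R), mul_assoc,
    inv_pow, Units.mul_inv_cancel_left] at h

theorem AddSubgroup.units_inv_pow_mul_mem {R : Type*} [CommRing R] {p : ℕ} (hp : p.Prime)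
    (u : Rˣ) (hu : (u : R) = p) (H : AddSubgroup R) [H.FiniteIndex] {x : R} (hx : x ∈ H)
    (n : ℕ) : ↑(u⁻¹ ^ n) * x ∈ H := by
  induction n with
  | zero => simpa using hx
  | succ n ih =>
    rw [pow_succ', Units.val_mul, mul_assoc]
    refine H.mem_of_zsmul_mem_of_isCoprime (a := (ordCompl[p] H.index : ℕ)) (b := p)
      (Nat.isCoprime_iff_coprime.2 (Nat.coprime_ordCompl hp FiniteIndex.index_ne_zero).symm) ?_ ?_
    · rw [natCast_zsmul, nsmul_eq_mul]
      exact H.ordCompl_index_mul_mem ⟨u, hu⟩ _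
    · rwa [natCast_zsmul, nsmul_eq_mul, ← hu, Units.mul_inv_cancel_left]

theorem AddSubgroup.mul_mem_of_finiteIndex {R : Type*} [CommRing R] [Algebra ℤ R] {p : ℕ}
    [IsLocalization.Away (p : ℤ) R] (hp : p.Prime) (H : AddSubgroup R) [H.FiniteIndex]
    (r : R) {x : R} (hx : x ∈ H) : r * x ∈ H := by
  set u := (Away.algebraMap_isUnit (S := R) (p : ℤ)).unit
  have hu : (u : R) = p := by simp [u]
  obtain ⟨n, a, hr⟩ := Away.surj (p : ℤ) r
  have hr' : r = a • ↑(u⁻¹ ^ n) := by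
    rw [zsmul_eq_mul, inv_pow, Units.eq_mul_inv_iff_mul_eq, Units.val_pow_eq_pow_val, hu]
    simpa using hr
  rw [hr', smul_mul_assoc]
  exact H.zsmul_mem (H.units_inv_pow_mul_mem hp u hu hx n) a

def AddSubgroup.toIdeal {R : Type*} [CommRing R] (H : AddSubgroup R)
    (hmul : ∀ (r : R) {x : R}, x ∈ H → r * x ∈ H) : Ideal R :=
  { H.toAddSubmonoid with smul_mem' := fun r _ hx => hmul r hx }

theorem Ideal.eq_span_absNorm_under {R : Type*} [CommRing R] [Algebra ℤ R] (M : Submonoid ℤ)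
    [IsLocalization M R] (I : Ideal R) : I = Ideal.span {((I.under ℤ).absNorm : R)} := by
  conv_lhs => rw [← map_under M R I, ← Int.ideal_span_absNorm_eq_self (I.under ℤ)]
  rw [Ideal.map_span, Set.image_singleton, map_natCast]

theorem AddSubgroup.exists_dvd_ordCompl_index_and_coe_eq_range_mul {R : Type*} [CommRing R]
    [Algebra ℤ R] {p : ℕ} [IsLocalization.Away (p : ℤ) R] (hp : p.Prime) (H : AddSubgroup R)
    [H.FiniteIndex] :
    ∃ d : ℕ, d ∣ ordCompl[p] H.index ∧ (H : Set R) = Set.range fun y : R => (d : R) * y := by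
  let I := H.toIdeal fun r _ hx => H.mul_mem_of_finiteIndex hp r hx
  set d := (I.under ℤ).absNorm
  refine ⟨d, ?_, ?_⟩
  · have hc : ((ordCompl[p] H.index : ℕ) : ℤ) ∈ I.under ℤ := by
      rw [Ideal.under, Ideal.mem_comap, map_natCast, ← mul_one ((ordCompl[p] H.index : ℕ) : R)]
      exact H.ordCompl_index_mul_mem (by simpa using Away.algebraMap_isUnit (S := R) (p : ℤ)) 1
    rwa [← Int.ideal_span_absNorm_eq_self (I.under ℤ), Ideal.mem_span_singleton,
      Int.natCast_dvd_natCast] at hc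
  · ext x
    rw [show (H : Set R) = I from rfl, Ideal.eq_span_absNorm_under (Submonoid.powers (p : ℤ)) I,
      SetLike.mem_coe, Ideal.mem_span_singleton']
    exact exists_congr fun y => by rw [mul_comm]

theorem AddSubgroup.nonempty_addEquiv_of_coe_eq_range_mul {R : Type*} [NonUnitalNonAssocRing R]
    (H : AddSubgroup R) {a : R} (ha : IsLeftRegular a)
    (hH : (H : Set R) = Set.range fun y : R => a * y) : Nonempty (H ≃+ R) :=
  have hrange : (AddMonoidHom.mulLeft a).range = H :=
    SetLike.coe_injective (by rw [AddMonoidHom.coe_range, hH]; rfl)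
  ⟨((AddMonoidHom.ofInjective (f := AddMonoidHom.mulLeft a) ha).trans
    (AddEquiv.addSubgroupCongr hrange)).symm⟩

/-- Every finite-index subgroup of the additive group `ℤ[1/p]` is `c · ℤ[1/p]` for
some positive integer `c` coprime to `p`; in particular it is isomorphic to `ℤ[1/p]`. -/
theorem finite_index_subgroup_zInvP
    (p : ℕ) (hp : p.Prime)
    (H : AddSubgroup (Localization.Away (p : ℤ))) (hH : H.FiniteIndex) :
    ∃ c : ℕ, 0 < c ∧ Nat.Coprime c p ∧
      (H : Set (Localization.Away (p : ℤ)))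
        = Set.range (fun y : Localization.Away (p : ℤ) => (c : Localization.Away (p : ℤ)) * y) ∧
      Nonempty (H ≃+ Localization.Away (p : ℤ)) := by
  obtain ⟨d, hdvd, hH_eq⟩ := H.exists_dvd_ordCompl_index_and_coe_eq_range_mul hp
  have hd : 0 < d := Nat.pos_of_dvd_of_pos hdvd (Nat.ordCompl_pos p hH.index_ne_zero)
  have hle : Submonoid.powers (p : ℤ) ≤ nonZeroDivisors ℤ :=
    powers_le_nonZeroDivisors_of_noZeroDivisors (mod_cast hp.ne_zero)
  have := isDomain_of_le_nonZeroDivisors (Localization.Away (p : ℤ)) hle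
  have hd' : (d : Localization.Away (p : ℤ)) ≠ 0 := by
    simpa using (IsLocalization.injective (Localization.Away (p : ℤ)) hle).ne
      (Int.natCast_ne_zero.2 hd.ne')
  exact ⟨d, hd, (Nat.coprime_ordCompl hp hH.index_ne_zero).symm.coprime_dvd_left hdvd, hH_eq,
    H.nonempty_addEquiv_of_coe_eq_range_mul (IsRegular.of_ne_zero hd').left hH_eq⟩
end

section
/- If Δ is a strongly commensuristic subgroup of a group Γ (meaning every isomorphism φ : Γ₁ → Γ₂ between finite-index subgroups of Γ satisfies φ(Δ ∩ Γ₁) = Δ ∩ Γ₂), then there is a natural group homomorphism from Comm(Γ) to Comm(Γ/Δ) when Δ is normal in Γ. -/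
/-- A partial automorphism of a group `Γ`: an isomorphism between finite-index
subgroups `dom` and `cod`, recorded as a total function that is multiplicative
and bijective from `dom` onto `cod`. -/
structure PartialIso (Γ : Type*) [Group Γ] where
  dom : Subgroup Γ
  cod : Subgroup Γ
  findom : dom.FiniteIndex
  fincod : cod.FiniteIndex
  toFun : Γ → Γ
  maps : ∀ x ∈ dom, toFun x ∈ cod
  mul : ∀ x ∈ dom, ∀ y ∈ dom, toFun (x * y) = toFun x * toFun y
  bij : Set.BijOn toFun dom cod

/-- Two partial automorphisms are equivalent if they agree on a finite-index subgroup. -/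
def PartialIso.Equiv {Γ : Type*} [Group Γ] (φ ψ : PartialIso Γ) : Prop :=
  ∃ Δ : Subgroup Γ, Δ.FiniteIndex ∧ Δ ≤ φ.dom ∧ Δ ≤ ψ.dom ∧
    ∀ x ∈ Δ, φ.toFun x = ψ.toFun x

/-- `χ` represents the composition (first `ψ`, then `φ`) of the commensurations of
`φ` and `ψ`: they agree on a finite-index subgroup. -/
def PartialIso.IsComp {Γ : Type*} [Group Γ] (χ φ ψ : PartialIso Γ) : Prop :=
  ∃ Δ : Subgroup Γ, Δ.FiniteIndex ∧ Δ ≤ ψ.dom ∧ Δ ≤ χ.dom ∧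
    ∀ x ∈ Δ, ψ.toFun x ∈ φ.dom ∧ χ.toFun x = φ.toFun (ψ.toFun x)

/-!
Since `φ` is injective on `dom φ` and maps `Δ ∩ dom φ` onto `Δ ∩ cod φ`, an element `x` of
`dom φ` lies in `Δ` exactly when `φ x` does. Applied to `x⁻¹ * y`, this says that `φ` respects
the cosets of `Δ`, so it descends to an isomorphism between the images of `dom φ` and `cod φ`
in `Γ ⧸ Δ`, which again have finite index. Agreement of two partial automorphisms (or of one
with a composite) on a finite-index subgroup `E` passes to the image of `E`.
-/

theorem Subgroup.finiteIndex_map_of_surjective {G G' : Type*} [Group G] [Group G']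
    {f : G →* G'} (hf : Function.Surjective f) (H : Subgroup G) [H.FiniteIndex] :
    (H.map f).FiniteIndex :=
  ⟨ne_zero_of_dvd_ne_zero Subgroup.FiniteIndex.index_ne_zero (H.index_map_dvd hf)⟩

namespace PartialIso

variable {Γ : Type*} [Group Γ]

theorem toFun_one (φ : PartialIso Γ) : φ.toFun 1 = 1 := by
  simpa using φ.mul 1 φ.dom.one_mem 1 φ.dom.one_mem

theorem toFun_inv (φ : PartialIso Γ) {x : Γ} (hx : x ∈ φ.dom) :
    φ.toFun x⁻¹ = (φ.toFun x)⁻¹ := by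
  have h := φ.mul x⁻¹ (φ.dom.inv_mem hx) x hx
  rw [inv_mul_cancel, φ.toFun_one] at h
  exact eq_inv_of_mul_eq_one_left h.symm

theorem toFun_inv_mul (φ : PartialIso Γ) {x y : Γ} (hx : x ∈ φ.dom) (hy : y ∈ φ.dom) :
    φ.toFun (x⁻¹ * y) = (φ.toFun x)⁻¹ * φ.toFun y := by
  rw [φ.mul _ (φ.dom.inv_mem hx) _ hy, φ.toFun_inv hx]

def PreservesSubgroup (φ : PartialIso Γ) (Δ : Subgroup Γ) : Prop :=
  φ.toFun '' ((Δ : Set Γ) ∩ φ.dom) = (Δ : Set Γ) ∩ φ.cod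

variable {φ : PartialIso Γ} {Δ : Subgroup Γ}

theorem PreservesSubgroup.toFun_mem_iff (h : φ.PreservesSubgroup Δ) {x : Γ} (hx : x ∈ φ.dom) :
    φ.toFun x ∈ Δ ↔ x ∈ Δ := by
  constructor
  · intro hφx
    have hφx' : φ.toFun x ∈ φ.toFun '' ((Δ : Set Γ) ∩ φ.dom) := h ▸ ⟨hφx, φ.maps x hx⟩
    obtain ⟨w, ⟨hwΔ, hw⟩, hwx⟩ := hφx'
    rwa [← φ.bij.injOn hw hx hwx]
  · intro hxΔ
    have hφx : φ.toFun x ∈ (Δ : Set Γ) ∩ φ.cod := h ▸ Set.mem_image_of_mem _ ⟨hxΔ, hx⟩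
    exact hφx.1

theorem PreservesSubgroup.mk_toFun_eq_mk_iff (h : φ.PreservesSubgroup Δ) {x y : Γ}
    (hx : x ∈ φ.dom) (hy : y ∈ φ.dom) :
    (φ.toFun x : Γ ⧸ Δ) = φ.toFun y ↔ (x : Γ ⧸ Δ) = y := by
  rw [QuotientGroup.eq, QuotientGroup.eq, ← φ.toFun_inv_mul hx hy,
    h.toFun_mem_iff (φ.dom.mul_mem (φ.dom.inv_mem hx) hy)]

variable (Δ) in
/-- Off the image of `dom φ` the identity is an arbitrary choice of value. -/
noncomputable def quotientFun (φ : PartialIso Γ) : Γ ⧸ Δ → Γ ⧸ Δ :=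
  Function.extend (fun x : φ.dom => (x : Γ ⧸ Δ)) (fun x => (φ.toFun x : Γ ⧸ Δ)) id

theorem quotientFun_mk (h : φ.PreservesSubgroup Δ) {x : Γ} (hx : x ∈ φ.dom) :
    φ.quotientFun Δ x = φ.toFun x :=
  Function.FactorsThrough.extend_apply (f := fun y : φ.dom => (y : Γ ⧸ Δ))
    (fun a b hab => (h.mk_toFun_eq_mk_iff a.2 b.2).2 hab) id ⟨x, hx⟩

variable [Δ.Normal]

variable (Δ) in
noncomputable def quotient (φ : PartialIso Γ) (h : φ.PreservesSubgroup Δ) :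
    PartialIso (Γ ⧸ Δ) where
  dom := φ.dom.map (QuotientGroup.mk' Δ)
  cod := φ.cod.map (QuotientGroup.mk' Δ)
  findom := have := φ.findom
    Subgroup.finiteIndex_map_of_surjective (QuotientGroup.mk'_surjective Δ) _
  fincod := have := φ.fincod
    Subgroup.finiteIndex_map_of_surjective (QuotientGroup.mk'_surjective Δ) _
  toFun := φ.quotientFun Δ
  maps := by
    rintro _ ⟨x, hx, rfl⟩
    exact ⟨φ.toFun x, φ.maps x hx, (quotientFun_mk h hx).symm⟩
  mul := by
    rintro _ ⟨x, hx, rfl⟩ _ ⟨y, hy, rfl⟩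
    simp only [QuotientGroup.mk'_apply, ← QuotientGroup.mk_mul]
    rw [quotientFun_mk h (φ.dom.mul_mem hx hy), quotientFun_mk h hx, quotientFun_mk h hy,
      φ.mul x hx y hy, QuotientGroup.mk_mul]
  bij := by
    refine ⟨?mapsTo, ?injOn, ?surjOn⟩
    · rintro _ ⟨x, hx, rfl⟩
      exact ⟨φ.toFun x, φ.maps x hx, (quotientFun_mk h hx).symm⟩
    · rintro _ ⟨x, hx, rfl⟩ _ ⟨y, hy, rfl⟩ hxy
      simp only [QuotientGroup.mk'_apply, quotientFun_mk h hx, quotientFun_mk h hy] at hxy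
      exact (h.mk_toFun_eq_mk_iff hx hy).1 hxy
    · rintro _ ⟨_, hz, rfl⟩
      obtain ⟨x, hx, rfl⟩ := φ.bij.surjOn hz
      exact ⟨x, ⟨x, hx, rfl⟩, quotientFun_mk h hx⟩

theorem quotient_toFun_mk (h : φ.PreservesSubgroup Δ) {x : Γ} (hx : x ∈ φ.dom) :
    (φ.quotient Δ h).toFun x = φ.toFun x :=
  quotientFun_mk h hx

theorem Equiv.quotient {ψ : PartialIso Γ} (hφ : φ.PreservesSubgroup Δ)
    (hψ : ψ.PreservesSubgroup Δ) (he : φ.Equiv ψ) :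
    (φ.quotient Δ hφ).Equiv (ψ.quotient Δ hψ) := by
  obtain ⟨E, hE, hEφ, hEψ, hagree⟩ := he
  refine ⟨E.map (QuotientGroup.mk' Δ),
    Subgroup.finiteIndex_map_of_surjective (QuotientGroup.mk'_surjective Δ) E,
    Subgroup.map_mono hEφ, Subgroup.map_mono hEψ, ?_⟩
  rintro _ ⟨x, hx, rfl⟩
  rw [QuotientGroup.mk'_apply, quotient_toFun_mk hφ (hEφ hx), quotient_toFun_mk hψ (hEψ hx),
    hagree x hx]

theorem IsComp.quotient {χ ψ : PartialIso Γ} (hχ : χ.PreservesSubgroup Δ)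
    (hφ : φ.PreservesSubgroup Δ) (hψ : ψ.PreservesSubgroup Δ) (hc : χ.IsComp φ ψ) :
    (χ.quotient Δ hχ).IsComp (φ.quotient Δ hφ) (ψ.quotient Δ hψ) := by
  obtain ⟨E, hE, hEψ, hEχ, hcomp⟩ := hc
  refine ⟨E.map (QuotientGroup.mk' Δ),
    Subgroup.finiteIndex_map_of_surjective (QuotientGroup.mk'_surjective Δ) E,
    Subgroup.map_mono hEψ, Subgroup.map_mono hEχ, ?_⟩
  rintro _ ⟨x, hx, rfl⟩
  obtain ⟨hψx, hχx⟩ := hcomp x hx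
  rw [QuotientGroup.mk'_apply, quotient_toFun_mk hψ (hEψ hx), quotient_toFun_mk hχ (hEχ hx),
    quotient_toFun_mk hφ hψx, hχx]
  exact ⟨⟨ψ.toFun x, hψx, rfl⟩, rfl⟩

end PartialIso

/-- If `Δ` is a normal, strongly commensuristic subgroup of `Γ`, there is a natural
homomorphism `Comm(Γ) → Comm(Γ/Δ)`: a map on partial automorphisms respecting
equivalence and composition, compatible with the quotient projection. -/
theorem comm_map_of_strongly_commensuristic
    (Γ : Type*) [Group Γ] (Δ : Subgroup Γ) [Δ.Normal]
    (hsc : ∀ φ : PartialIso Γ,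
      φ.toFun '' ((Δ : Set Γ) ∩ (φ.dom : Set Γ)) = (Δ : Set Γ) ∩ (φ.cod : Set Γ)) :
    ∃ F : PartialIso Γ → PartialIso (Γ ⧸ Δ),
      (∀ φ ψ, PartialIso.Equiv φ ψ → PartialIso.Equiv (F φ) (F ψ)) ∧
      (∀ χ φ ψ, PartialIso.IsComp χ φ ψ → PartialIso.IsComp (F χ) (F φ) (F ψ)) ∧
      (∀ φ : PartialIso Γ, ∀ x ∈ φ.dom,
        (F φ).toFun (QuotientGroup.mk x) = QuotientGroup.mk (φ.toFun x)) :=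
  ⟨fun φ => φ.quotient Δ (hsc φ),
    fun φ ψ => PartialIso.Equiv.quotient (hsc φ) (hsc ψ),
    fun χ φ ψ => PartialIso.IsComp.quotient (hsc χ) (hsc φ) (hsc ψ),
    fun φ _ hx => PartialIso.quotient_toFun_mk (hsc φ) hx⟩
end

section
/- Let V be a ℚ-vector space. The direct limit over finite-index subgroups H ≤ ℤ^N of Hom(H, V) under restriction maps (the group of equivalence classes of virtual homomorphisms from ℤ^N to V) is isomorphic to Hom(ℚ^N, V) as abelian groups. -/
/-- A virtual homomorphism from `ℤ^N` to `V`: a homomorphism defined on a finite-index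
subgroup `H`, recorded as a total function that is additive on `H`. -/
structure VirtHom (N : ℕ) (V : Type*) [AddCommGroup V] where
  H : AddSubgroup (Fin N → ℤ)
  fin : H.FiniteIndex
  f : (Fin N → ℤ) → V
  hadd : ∀ x ∈ H, ∀ y ∈ H, f (x + y) = f x + f y

/-- Two virtual homomorphisms are equivalent if they agree on a finite-index subgroup. -/
def VirtHom.Equiv {N : ℕ} {V : Type*} [AddCommGroup V] (φ ψ : VirtHom N V) : Prop :=
  ∃ Δ : AddSubgroup (Fin N → ℤ), Δ.FiniteIndex ∧ Δ ≤ φ.H ∧ Δ ≤ ψ.H ∧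
    ∀ x ∈ Δ, φ.f x = ψ.f x

namespace VirtAux

variable {N : ℕ} {V : Type*} [AddCommGroup V] [Module ℚ V]

/-- coercion ℤ^N →+ ℚ^N -/
def intcoe (N : ℕ) : (Fin N → ℤ) →+ (Fin N → ℚ) where
  toFun x := fun i => (x i : ℚ)
  map_zero' := by funext i; simp
  map_add' x y := by funext i; simp

/-- The restriction of `φ.f` to `φ.H` as a genuine hom. -/
def F (φ : VirtHom N V) : φ.H →+ V where
  toFun h := φ.f h
  map_zero' := by
    have h := φ.hadd 0 φ.H.zero_mem 0 φ.H.zero_mem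
    rw [add_zero] at h
    have : φ.f 0 + 0 = φ.f 0 + φ.f 0 := by rw [add_zero]; exact h
    exact (add_left_cancel this).symm
  map_add' x y := φ.hadd x x.2 y y.2

lemma sum_single_smul (n : ℕ) (x : Fin N → ℤ) :
    ∑ i, x i • (n • Pi.single i (1 : ℤ)) = n • x := by
  ext j
  simp [Finset.sum_apply, Pi.single_apply, mul_ite, mul_comm]

noncomputable def Phi (φ : VirtHom N V) : (Fin N → ℚ) →+ V :=
  ((Pi.basisFun ℚ (Fin N)).constr ℚ (fun i =>
    (φ.H.index : ℚ)⁻¹ •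
      F φ ⟨φ.H.index • Pi.single i 1, AddSubgroup.nsmul_index_mem _ _⟩)).toAddMonoidHom

lemma Phi_coe (φ : VirtHom N V) (x : Fin N → ℤ) (hx : x ∈ φ.H) :
    Phi φ (intcoe N x) = φ.f x := by
  haveI := φ.fin
  set n := φ.H.index with hn
  have hn0 : (n : ℚ) ≠ 0 := Nat.cast_ne_zero.2 AddSubgroup.FiniteIndex.index_ne_zero
  have w : ∀ i : Fin N, (n • Pi.single i (1:ℤ) : Fin N → ℤ) ∈ φ.H :=
    fun i => AddSubgroup.nsmul_index_mem _ _
  have step1 : Phi φ (intcoe N x)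
      = ∑ i, (x i : ℚ) • ((n : ℚ)⁻¹ • F φ ⟨n • Pi.single i 1, w i⟩) := by
    simp [Phi, Module.Basis.constr_apply_fintype, intcoe]
    rfl
  rw [step1]
  have step2 : ∑ i, (x i : ℚ) • ((n : ℚ)⁻¹ • F φ ⟨n • Pi.single i 1, w i⟩)
      = (n : ℚ)⁻¹ • ∑ i, x i • F φ ⟨n • Pi.single i 1, w i⟩ := by
    rw [Finset.smul_sum]
    refine Finset.sum_congr rfl fun i _ => ?_
    rw [smul_comm, Int.cast_smul_eq_zsmul]
  rw [step2]
  have step3 : ∑ i, x i • F φ ⟨n • Pi.single i 1, w i⟩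
      = F φ ⟨n • x, AddSubgroup.nsmul_index_mem _ _⟩ := by
    calc ∑ i, x i • F φ ⟨n • Pi.single i 1, w i⟩
        = ∑ i, F φ (x i • (⟨n • Pi.single i 1, w i⟩ : φ.H)) := by
          simp [map_zsmul]
      _ = F φ (∑ i, x i • (⟨n • Pi.single i 1, w i⟩ : φ.H)) :=
          (map_sum (F φ) _ Finset.univ).symm
      _ = F φ ⟨n • x, AddSubgroup.nsmul_index_mem _ _⟩ := by
          congr 1
          ext : 1
          push_cast
          exact sum_single_smul n x
  rw [step3]
  have : (⟨n • x, AddSubgroup.nsmul_index_mem _ _⟩ : φ.H) = n • (⟨x, hx⟩ : φ.H) := rfl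
  rw [this, map_nsmul, ← Nat.cast_smul_eq_nsmul ℚ, smul_smul, inv_mul_cancel₀ hn0, one_smul]
  rfl

lemma ext_of_agree (f g : (Fin N → ℚ) →+ V) (Δ : AddSubgroup (Fin N → ℤ))
    (hΔ : Δ.FiniteIndex) (h : ∀ x ∈ Δ, f (intcoe N x) = g (intcoe N x)) : f = g := by
  haveI := hΔ
  have hn0 : (Δ.index : ℚ) ≠ 0 := Nat.cast_ne_zero.2 AddSubgroup.FiniteIndex.index_ne_zero
  have key : f.toRatLinearMap = g.toRatLinearMap := by
    apply (Pi.basisFun ℚ (Fin N)).ext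
    intro i
    have hm : Δ.index • (Pi.single i 1 : Fin N → ℤ) ∈ Δ := AddSubgroup.nsmul_index_mem _ _
    have h2 := h _ hm
    have hc : intcoe N (Δ.index • Pi.single i (1:ℤ))
        = (Δ.index : ℚ) • (Pi.single i 1 : Fin N → ℚ) := by
      ext j; simp [intcoe, Pi.single_apply, mul_ite]
    rw [hc] at h2
    have hb : (Pi.basisFun ℚ (Fin N)) i = (Pi.single i 1 : Fin N → ℚ) := by
      simp [Pi.basisFun_apply]
    have h3 : (Δ.index : ℚ) • f.toRatLinearMap (Pi.single i 1)
        = (Δ.index : ℚ) • g.toRatLinearMap (Pi.single i 1) := by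
      rw [← map_smul, ← map_smul]; exact h2
    rw [hb]
    exact smul_right_injective V hn0 h3
  exact DFunLike.ext f g fun x => congrFun (congrArg DFunLike.coe key) x

end VirtAux

/-- The group of equivalence classes of virtual homomorphisms from `ℤ^N` to a
`ℚ`-vector space `V` — the direct limit over finite-index subgroups `H ≤ ℤ^N` of
`Hom(H, V)` — is isomorphic to `Hom(ℚ^N, V)`: there is a map to `Hom(ℚ^N, V)`
descending to an additive bijection on equivalence classes. -/
theorem virtual_homs_int_pow_to_rat_vector_space
    (N : ℕ) (V : Type*) [AddCommGroup V] [Module ℚ V] :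
    ∃ Φ : VirtHom N V → ((Fin N → ℚ) →+ V),
      (∀ φ ψ, VirtHom.Equiv φ ψ ↔ Φ φ = Φ ψ) ∧
      Function.Surjective Φ ∧
      (∀ χ φ ψ : VirtHom N V,
        (∃ Δ : AddSubgroup (Fin N → ℤ), Δ.FiniteIndex ∧ Δ ≤ χ.H ∧ Δ ≤ φ.H ∧ Δ ≤ ψ.H ∧
          ∀ x ∈ Δ, χ.f x = φ.f x + ψ.f x) → Φ χ = Φ φ + Φ ψ) := by
  classical
  refine ⟨VirtAux.Phi, fun φ ψ => ⟨?_, ?_⟩, ?_, ?_⟩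
  · rintro ⟨Δ, hfin, hφ, hψ, hag⟩
    refine VirtAux.ext_of_agree _ _ Δ hfin fun x hx => ?_
    rw [VirtAux.Phi_coe φ x (hφ hx), VirtAux.Phi_coe ψ x (hψ hx)]
    exact hag x hx
  · intro h
    haveI := φ.fin; haveI := ψ.fin
    refine ⟨φ.H ⊓ ψ.H, inferInstance, inf_le_left, inf_le_right, fun x hx => ?_⟩
    rw [← VirtAux.Phi_coe φ x hx.1, ← VirtAux.Phi_coe ψ x hx.2, h]
  · intro L
    refine ⟨⟨⊤, inferInstance, fun x => L (VirtAux.intcoe N x), fun x _ y _ => by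
      show L (VirtAux.intcoe N (x + y)) = _; rw [map_add, map_add]⟩, ?_⟩
    refine VirtAux.ext_of_agree _ _ ⊤ inferInstance fun x hx => ?_
    exact VirtAux.Phi_coe _ x hx
  · rintro χ φ ψ ⟨Δ, hfin, hχ, hφ, hψ, hag⟩
    refine VirtAux.ext_of_agree _ _ Δ hfin fun x hx => ?_
    rw [VirtAux.Phi_coe χ x (hχ hx)]
    simp only [AddMonoidHom.add_apply]
    rw [VirtAux.Phi_coe φ x (hφ hx), VirtAux.Phi_coe ψ x (hψ hx)]
    exact hag x hx
end
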